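/- arXiv:math/0111326 — 4 statements merged into one kernel-verified Lean document; each statement's English description precedes it below -/
import Mathlib

section
/- Let a, s, α, β, γ be real numbers with a ≠ 0, 0 < s ≤ 1, α² + a² = s², |β| ≤ 1 and |γ| ≤ s/20. Then for all real w, y with |w| ≤ s/10 and |y| ≤ 1, one has (1/4)(y² + s²) ≤ (α + βy + w)² + y² + a² ≤ 4(y² + s²). -/
set_option maxHeartbeats 1000000
private lemma aux_lower (u t v s : ℝ) (hu0 : 0 ≤ u) (hus : u ≤ s) (ht0 : 0 ≤ t)
    (hv0 : 0 ≤ v) (ht : t ≤ v + s / 10) (hv : v ≤ 3 * s / 5) (hs : 0 < s) :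
    (1 / 4) * (v ^ 2 + s ^ 2) ≤ (u - t) ^ 2 + v ^ 2 + (s ^ 2 - u ^ 2) := by
  nlinarith [mul_nonneg (sub_nonneg.mpr hus) ht0,
    mul_nonneg (sub_nonneg.mpr ht) (by linarith : (0:ℝ) ≤ 2 * s - t - v - s / 10),
    sq_nonneg (35 * v - 18 * s), hs.le]

private lemma aux_upper (u t v s : ℝ) (hu0 : 0 ≤ u) (hus : u ≤ s) (ht0 : 0 ≤ t)
    (hv0 : 0 ≤ v) (ht : t ≤ v + s / 10) (hs : 0 < s) :
    (u + t) ^ 2 + v ^ 2 + s ^ 2 ≤ 4 * (v ^ 2 + s ^ 2) := by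
  nlinarith [sq_nonneg (s - v), mul_nonneg hv0 hs.le, sq_nonneg (u + t - s - v - s/10)]

/-- Lemma 4.3: elementary two-sided estimate. -/
theorem stmt_4 (a s α β γ : ℝ) (ha : a ≠ 0) (hs0 : 0 < s) (hs1 : s ≤ 1)
    (hαa : α ^ 2 + a ^ 2 = s ^ 2) (hβ : |β| ≤ 1) (hγ : |γ| ≤ s / 20)
    (w y : ℝ) (hw : |w| ≤ s / 10) (hy : |y| ≤ 1) :
    (1 / 4) * (y ^ 2 + s ^ 2) ≤ (α + β * y + w) ^ 2 + y ^ 2 + a ^ 2 ∧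
    (α + β * y + w) ^ 2 + y ^ 2 + a ^ 2 ≤ 4 * (y ^ 2 + s ^ 2) := by
  have ht0 : (0:ℝ) ≤ |β * y + w| := abs_nonneg _
  have htle : |β * y + w| ≤ |y| + s / 10 := by
    calc |β * y + w| ≤ |β * y| + |w| := abs_add_le _ _
    _ ≤ |y| + s / 10 := by
        rw [abs_mul]
        have : |β| * |y| ≤ 1 * |y| :=
          mul_le_mul_of_nonneg_right hβ (abs_nonneg y)
        linarith
  have hu0 : (0:ℝ) ≤ |α| := abs_nonneg α
  have hu2 : |α| ^ 2 = α ^ 2 := sq_abs α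
  have hus : |α| ≤ s := by nlinarith [sq_nonneg a]
  have hv2 : |y| ^ 2 = y ^ 2 := sq_abs y
  have hv0 : (0:ℝ) ≤ |y| := abs_nonneg y
  have ht2 : |β * y + w| ^ 2 = (β * y + w) ^ 2 := sq_abs _
  have ha2 : a ^ 2 = s ^ 2 - α ^ 2 := by linarith
  constructor
  · rcases le_or_gt (s ^ 2) (3 * y ^ 2) with hc | hc
    · nlinarith [sq_nonneg (α + β * y + w), sq_nonneg a]
    · have hvy : |y| ≤ 3 * s / 5 := by nlinarith
      have hkey : (|α| - |β * y + w|) ^ 2 ≤ (α + β * y + w) ^ 2 := by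
        have h1 : -(α * (β * y + w)) ≤ |α| * |β * y + w| := by
          rw [← abs_mul]; exact neg_le_abs _
        nlinarith
      have := aux_lower |α| |β * y + w| |y| s hu0 hus ht0 hv0 htle hvy hs0
      nlinarith
  · have hkey : (α + β * y + w) ^ 2 ≤ (|α| + |β * y + w|) ^ 2 := by
      have h1 : α * (β * y + w) ≤ |α| * |β * y + w| := by
        rw [← abs_mul]; exact le_abs_self _
      nlinarith
    have := aux_upper |α| |β * y + w| |y| s hu0 hus ht0 hv0 htle hs0
    linarith [sq_nonneg α]
end

section
/- Let a ≠ 0, 0 < s ≤ 1, α² + a² = s², |β| ≤ 1, |γ| ≤ s/20, and let D be the closed unit disc in ℝ². Define g(x,y) = αx + βxy + γ(x²/2 + G(y)) where G(y) = ∫₀^y F(w) dw and F(y) = −(1/2)∫₀^y ((α+βw)² + w² + a²)^{−1/2} dw. Define f_± = g ± 8 s^{−1} γ² (1 − x² − y²) on D. Then P(f₊) ≤ 0 and P(f₋) ≥ 0 on D, where P(f) = ((∂f/∂x)² + y² + a²)^{−1/2} ∂²f/∂x² + 2 ∂²f/∂y². -/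
/-!
Write `φ(u) = (u² + y² + a²)^{-1/2}`. For `f = g + c (1 - x² - y²)` a direct computation gives
`P(f) = γ (φ(f_x) - φ(g_x)) - 2c φ(f_x) - 4c`, the first term coming from the parts `γ x²/2` and
`γ G(y)` of `g`, which are chosen to nearly cancel. Since `u ↦ √(u² + r)` is 1-Lipschitz,
`|f_x - g_x| = |(γ - 2c) x| ≤ 2|γ|` and `√(g_x² + y² + a²) ≥ s/√2` when `|β| ≤ 1`, that first term
is at most `16 s⁻¹ γ² φ(f_x) = 2|c| φ(f_x)` in absolute value. Hence `P(f_±)` has the sign of `∓c`.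
-/

/-- The quasilinear operator `P(f) = ((∂f/∂x)² + y² + a²)^{-1/2} ∂²f/∂x² + 2 ∂²f/∂y²`. -/
noncomputable def Pop (a : ℝ) (f : ℝ × ℝ → ℝ) (p : ℝ × ℝ) : ℝ :=
  ((fderiv ℝ f p ((1 : ℝ), (0 : ℝ))) ^ 2 + p.2 ^ 2 + a ^ 2) ^ (-(1 : ℝ) / 2)
    * fderiv ℝ (fun q => fderiv ℝ f q ((1 : ℝ), (0 : ℝ))) p ((1 : ℝ), (0 : ℝ))
  + 2 * fderiv ℝ (fun q => fderiv ℝ f q ((0 : ℝ), (1 : ℝ))) p ((0 : ℝ), (1 : ℝ))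

theorem Real.rpow_neg_half_eq_inv_sqrt {x : ℝ} (hx : 0 ≤ x) :
    x ^ (-(1 : ℝ) / 2) = (√x)⁻¹ := by
  rw [neg_div, Real.rpow_neg hx, Real.sqrt_eq_rpow]

theorem abs_sqrt_sq_add_sub_sqrt_sq_add_le {r : ℝ} (hr : 0 ≤ r) (u v : ℝ) :
    |√(u ^ 2 + r) - √(v ^ 2 + r)| ≤ |u - v| := by
  have hP := Real.sq_sqrt (show 0 ≤ u ^ 2 + r by positivity)
  have hQ := Real.sq_sqrt (show 0 ≤ v ^ 2 + r by positivity)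
  have hPQ : u * v + r ≤ √(u ^ 2 + r) * √(v ^ 2 + r) := by
    rw [← Real.sqrt_mul (by positivity)]
    exact Real.le_sqrt_of_sq_le (by nlinarith [mul_nonneg hr (sq_nonneg (u - v))])
  rw [← sq_le_sq]
  nlinarith

theorem abs_mul_rpow_neg_half_sub_le {s γ r u v : ℝ} (hs : 0 < s) (hr : 0 < r)
    (huv : |u - v| ≤ 2 * |γ|) (hv : s ^ 2 ≤ 64 * (v ^ 2 + r)) :
    |γ * ((u ^ 2 + r) ^ (-(1 : ℝ) / 2) - (v ^ 2 + r) ^ (-(1 : ℝ) / 2))| ≤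
      16 * s⁻¹ * γ ^ 2 * (u ^ 2 + r) ^ (-(1 : ℝ) / 2) := by
  rw [Real.rpow_neg_half_eq_inv_sqrt (by positivity),
    Real.rpow_neg_half_eq_inv_sqrt (by positivity)]
  set P := √(u ^ 2 + r)
  set Q := √(v ^ 2 + r)
  have hP : 0 < P := Real.sqrt_pos.2 (by positivity)
  have hQ : 0 < Q := Real.sqrt_pos.2 (by positivity)
  have hsQ : s ≤ 8 * Q := by nlinarith [Real.sq_sqrt (show 0 ≤ v ^ 2 + r by positivity)]
  have hPQ : |Q - P| ≤ 2 * |γ| := by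
    rw [abs_sub_comm]; exact (abs_sqrt_sq_add_sub_sqrt_sq_add_le hr.le u v).trans huv
  calc |γ * (P⁻¹ - Q⁻¹)| = |γ| * |Q - P| / (P * Q) := by
        rw [inv_sub_inv hP.ne' hQ.ne', abs_mul, abs_div, abs_of_pos (mul_pos hP hQ), mul_div_assoc]
    _ ≤ |γ| * (2 * |γ|) / (P * Q) := by gcongr
    _ ≤ 16 * s⁻¹ * γ ^ 2 * P⁻¹ := by
        rw [div_le_iff₀ (mul_pos hP hQ), ← sq_abs γ]
        field_simp
        nlinarith [sq_nonneg |γ|]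

theorem sq_le_two_mul_sq_add_sq_add_sq {a s α β : ℝ} (hα : α ^ 2 + a ^ 2 = s ^ 2) (hβ : |β| ≤ 1)
    (y : ℝ) : s ^ 2 ≤ 2 * ((α + β * y) ^ 2 + y ^ 2 + a ^ 2) := by
  have hβy : (β * y) ^ 2 ≤ y ^ 2 := by
    rw [mul_pow, ← sq_abs β]
    exact mul_le_of_le_one_left (sq_nonneg y) (pow_le_one₀ (abs_nonneg β) hβ)
  nlinarith [sq_nonneg (α + 2 * β * y)]

theorem sixteen_mul_inv_mul_sq_le {s γ : ℝ} (hs : 0 < s) (hγ : |γ| ≤ s / 20) :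
    16 * s⁻¹ * γ ^ 2 ≤ |γ| := by
  rw [← sq_abs]
  have := abs_nonneg γ
  field_simp
  nlinarith

theorem abs_mul_rpow_neg_half_sub_le_of_bump {a s α β γ c x y : ℝ} (ha : a ≠ 0) (hs : 0 < s)
    (hα : α ^ 2 + a ^ 2 = s ^ 2) (hβ : |β| ≤ 1) (hγ : |γ| ≤ s / 20) (hc : |c| = 8 * s⁻¹ * γ ^ 2)
    (hx : |x| ≤ 1) :
    |γ * (((α + β * y + (γ - 2 * c) * x) ^ 2 + y ^ 2 + a ^ 2) ^ (-(1 : ℝ) / 2)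
        - ((α + β * y) ^ 2 + y ^ 2 + a ^ 2) ^ (-(1 : ℝ) / 2))| ≤
      2 * |c| * ((α + β * y + (γ - 2 * c) * x) ^ 2 + y ^ 2 + a ^ 2) ^ (-(1 : ℝ) / 2) := by
  have h2c : 2 * |c| = 16 * s⁻¹ * γ ^ 2 := by rw [hc]; ring
  have hδ : |α + β * y + (γ - 2 * c) * x - (α + β * y)| ≤ 2 * |γ| := by
    rw [add_sub_cancel_left, abs_mul]
    calc |γ - 2 * c| * |x| ≤ (|γ| + 2 * |c|) * 1 := by
          gcongr
          exact (abs_sub _ _).trans_eq (by rw [abs_mul, abs_two])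
      _ ≤ 2 * |γ| := by linarith [sixteen_mul_inv_mul_sq_le hs hγ]
  simp only [add_assoc _ (y ^ 2)]
  rw [h2c]
  exact abs_mul_rpow_neg_half_sub_le hs (by positivity) hδ
    (by linarith [sq_le_two_mul_sq_add_sq_add_sq hα hβ y, sq_nonneg (α + β * y), sq_nonneg y,
      sq_nonneg a])

theorem Pop_quadratic_in_x (a α β k : ℝ) {h h' : ℝ → ℝ} {h'' : ℝ} {p : ℝ × ℝ}
    (hh : ∀ y, HasDerivAt h (h' y) y) (hh' : HasDerivAt h' h'' p.2) :
    Pop a (fun q => α * q.1 + β * q.1 * q.2 + k / 2 * q.1 ^ 2 + h q.2) p =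
      ((α + β * p.2 + k * p.1) ^ 2 + p.2 ^ 2 + a ^ 2) ^ (-(1 : ℝ) / 2) * k + 2 * h'' := by
  have hx : ∀ q : ℝ × ℝ, HasFDerivAt (fun q : ℝ × ℝ => q.1) (ContinuousLinearMap.fst ℝ ℝ ℝ) q :=
    fun q => hasFDerivAt_fst
  have hy : ∀ q : ℝ × ℝ, HasFDerivAt (fun q : ℝ × ℝ => q.2) (ContinuousLinearMap.snd ℝ ℝ ℝ) q :=
    fun q => hasFDerivAt_snd
  have hD : ∀ q : ℝ × ℝ, HasFDerivAt (fun q => α * q.1 + β * q.1 * q.2 + k / 2 * q.1 ^ 2 + h q.2)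
      ((α + β * q.2 + k * q.1) • ContinuousLinearMap.fst ℝ ℝ ℝ
        + (β * q.1 + h' q.2) • ContinuousLinearMap.snd ℝ ℝ ℝ) q := by
    intro q
    have h := (((hx q).const_mul α).add (((hx q).mul (hy q)).const_mul β)).add
      (((hx q).mul (hx q)).const_mul (k / 2))|>.add ((hh q.2).comp_hasFDerivAt q (hy q))
    refine (h.congr_fderiv ?_).congr_of_eventuallyEq (.of_forall fun r => ?_)
    · ext <;> simp; ring
    · simp only [Pi.add_apply, Pi.mul_apply, Function.comp_apply]; ring
  have hfx : (fun q => fderiv ℝ (fun q => α * q.1 + β * q.1 * q.2 + k / 2 * q.1 ^ 2 + h q.2) q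
      ((1 : ℝ), (0 : ℝ))) = fun q => α + β * q.2 + k * q.1 := by
    ext q; simp [(hD q).fderiv]
  have hfy : (fun q => fderiv ℝ (fun q => α * q.1 + β * q.1 * q.2 + k / 2 * q.1 ^ 2 + h q.2) q
      ((0 : ℝ), (1 : ℝ))) = fun q => β * q.1 + h' q.2 := by
    ext q; simp [(hD q).fderiv]
  have hfxx : HasFDerivAt (fun q : ℝ × ℝ => α + β * q.2 + k * q.1)
      (β • ContinuousLinearMap.snd ℝ ℝ ℝ + k • ContinuousLinearMap.fst ℝ ℝ ℝ) p := by
    have h := ((hasFDerivAt_const α p).fun_add ((hy p).const_mul β)).fun_add ((hx p).const_mul k)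
    exact h.congr_fderiv (by simp)
  have hfyy : HasFDerivAt (fun q : ℝ × ℝ => β * q.1 + h' q.2)
      (β • ContinuousLinearMap.fst ℝ ℝ ℝ + h'' • ContinuousLinearMap.snd ℝ ℝ ℝ) p :=
    ((hx p).const_mul β).add (hh'.comp_hasFDerivAt p (hy p))
  simp [Pop, hfx, hfy, hfxx.fderiv, hfyy.fderiv, (hD p).fderiv]

noncomputable def slagF (a α β t : ℝ) : ℝ :=
  -(1 / 2) * ∫ w in (0:ℝ)..t, ((α + β * w) ^ 2 + w ^ 2 + a ^ 2) ^ (-(1 : ℝ) / 2)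

noncomputable def slagG (a α β y : ℝ) : ℝ := ∫ t in (0:ℝ)..y, slagF a α β t

theorem hasDerivAt_slagF {a : ℝ} (ha : a ≠ 0) (α β t : ℝ) :
    HasDerivAt (slagF a α β) (-(1 / 2) * ((α + β * t) ^ 2 + t ^ 2 + a ^ 2) ^ (-(1 : ℝ) / 2)) t := by
  have hφ : Continuous fun w : ℝ => ((α + β * w) ^ 2 + w ^ 2 + a ^ 2) ^ (-(1 : ℝ) / 2) :=
    (by fun_prop : Continuous fun w : ℝ => (α + β * w) ^ 2 + w ^ 2 + a ^ 2).rpow_const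
      fun w => .inl (by positivity)
  exact ((hφ.integral_hasStrictDerivAt 0 t).hasDerivAt).const_mul _

theorem hasDerivAt_slagG {a : ℝ} (ha : a ≠ 0) (α β y : ℝ) :
    HasDerivAt (slagG a α β) (slagF a α β y) y :=
  have hF : Continuous (slagF a α β) :=
    continuous_iff_continuousAt.2 fun t => (hasDerivAt_slagF ha α β t).continuousAt
  (hF.integral_hasStrictDerivAt 0 y).hasDerivAt

theorem Pop_add_bump {a α β γ : ℝ} (ha : a ≠ 0) {g : ℝ × ℝ → ℝ}
    (hg : ∀ x y : ℝ, g (x, y) = α * x + β * x * y + γ * (x ^ 2 / 2 + slagG a α β y))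
    (c : ℝ) (p : ℝ × ℝ) :
    Pop a (fun q => g q + c * (1 - q.1 ^ 2 - q.2 ^ 2)) p =
      γ * (((α + β * p.2 + (γ - 2 * c) * p.1) ^ 2 + p.2 ^ 2 + a ^ 2) ^ (-(1 : ℝ) / 2)
          - ((α + β * p.2) ^ 2 + p.2 ^ 2 + a ^ 2) ^ (-(1 : ℝ) / 2))
        - 2 * c * ((α + β * p.2 + (γ - 2 * c) * p.1) ^ 2 + p.2 ^ 2 + a ^ 2) ^ (-(1 : ℝ) / 2)
        - 4 * c := by
  have hf : (fun q => g q + c * (1 - q.1 ^ 2 - q.2 ^ 2)) = fun q : ℝ × ℝ =>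
      α * q.1 + β * q.1 * q.2 + (γ - 2 * c) / 2 * q.1 ^ 2
        + (γ * slagG a α β q.2 + c * (1 - q.2 ^ 2)) := by
    ext ⟨x, y⟩; rw [hg]; ring
  have hh : ∀ y, HasDerivAt (fun y => γ * slagG a α β y + c * (1 - y ^ 2))
      (γ * slagF a α β y - 2 * c * y) y := fun y =>
    (((hasDerivAt_slagG ha α β y).const_mul γ).fun_add
      ((((hasDerivAt_id y).fun_pow 2).const_sub 1).const_mul c)).congr_deriv (by simp; ring)
  have hh' : HasDerivAt (fun y => γ * slagF a α β y - 2 * c * y)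
      (γ * (-(1 / 2) * ((α + β * p.2) ^ 2 + p.2 ^ 2 + a ^ 2) ^ (-(1 : ℝ) / 2)) - 2 * c) p.2 :=
    (((hasDerivAt_slagF ha α β p.2).const_mul γ).fun_sub
      ((hasDerivAt_id p.2).const_mul (2 * c))).congr_deriv (by simp)
  rw [hf, Pop_quadratic_in_x a α β (γ - 2 * c) hh hh']
  ring

theorem stmt_5_general (a s α β γ : ℝ) (ha : a ≠ 0) (hs0 : 0 < s)
    (hα : α ^ 2 + a ^ 2 = s ^ 2) (hβ : |β| ≤ 1) (hγ : |γ| ≤ s / 20)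
    (g fplus fminus : ℝ × ℝ → ℝ)
    (hg : ∀ x y : ℝ, g (x, y) =
      α * x + β * x * y + γ * (x ^ 2 / 2 +
        ∫ t in (0:ℝ)..y, (-(1 / 2) *
          ∫ w in (0:ℝ)..t, ((α + β * w) ^ 2 + w ^ 2 + a ^ 2) ^ (-(1 : ℝ) / 2))))
    (hfp : ∀ p : ℝ × ℝ, fplus p = g p + 8 * s⁻¹ * γ ^ 2 * (1 - p.1 ^ 2 - p.2 ^ 2))
    (hfm : ∀ p : ℝ × ℝ, fminus p = g p - 8 * s⁻¹ * γ ^ 2 * (1 - p.1 ^ 2 - p.2 ^ 2)) :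
    ∀ p : ℝ × ℝ, p.1 ^ 2 + p.2 ^ 2 ≤ 1 →
      Pop a fplus p ≤ 0 ∧ 0 ≤ Pop a fminus p := by
  rintro ⟨x, y⟩ hp
  have hx : |x| ≤ 1 := abs_le_one_iff_mul_self_le_one.2 (by nlinarith [sq_nonneg y])
  have hc : |8 * s⁻¹ * γ ^ 2| = 8 * s⁻¹ * γ ^ 2 := abs_of_nonneg (by positivity)
  have hfp' : fplus = fun q => g q + 8 * s⁻¹ * γ ^ 2 * (1 - q.1 ^ 2 - q.2 ^ 2) := funext hfp
  have hfm' : fminus = fun q => g q + -(8 * s⁻¹ * γ ^ 2) * (1 - q.1 ^ 2 - q.2 ^ 2) := by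
    ext q; rw [hfm]; ring
  rw [hfp', hfm', Pop_add_bump ha hg, Pop_add_bump ha hg]
  have hplus := abs_mul_rpow_neg_half_sub_le_of_bump (y := y) ha hs0 hα hβ hγ hc hx
  have hminus := abs_mul_rpow_neg_half_sub_le_of_bump (y := y) ha hs0 hα hβ hγ
    ((abs_neg _).trans hc) hx
  rw [hc] at hplus
  rw [abs_neg, hc] at hminus
  have hc0 : 0 ≤ 8 * s⁻¹ * γ ^ 2 := by positivity
  exact ⟨by linarith [(abs_le.1 hplus).2], by linarith [(abs_le.1 hminus).1]⟩

/-- Proposition 4.4: `f₊ = g + 8 s⁻¹ γ² (1 - x² - y²)` is a supersolution and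
`f₋ = g - 8 s⁻¹ γ² (1 - x² - y²)` a subsolution of `P(f) = 0` on the closed unit disc. -/
theorem stmt_5 (a s α β γ : ℝ) (ha : a ≠ 0) (hs0 : 0 < s) (hs1 : s ≤ 1)
    (hα : α ^ 2 + a ^ 2 = s ^ 2) (hβ : |β| ≤ 1) (hγ : |γ| ≤ s / 20)
    (g fplus fminus : ℝ × ℝ → ℝ)
    (hg : ∀ x y : ℝ, g (x, y) =
      α * x + β * x * y + γ * (x ^ 2 / 2 +
        ∫ t in (0:ℝ)..y, (-(1 / 2) *
          ∫ w in (0:ℝ)..t, ((α + β * w) ^ 2 + w ^ 2 + a ^ 2) ^ (-(1 : ℝ) / 2))))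
    (hfp : ∀ p : ℝ × ℝ, fplus p = g p + 8 * s⁻¹ * γ ^ 2 * (1 - p.1 ^ 2 - p.2 ^ 2))
    (hfm : ∀ p : ℝ × ℝ, fminus p = g p - 8 * s⁻¹ * γ ^ 2 * (1 - p.1 ^ 2 - p.2 ^ 2)) :
    ∀ p : ℝ × ℝ, p.1 ^ 2 + p.2 ^ 2 ≤ 1 →
      Pop a fplus p ≤ 0 ∧ 0 ≤ Pop a fminus p :=
  stmt_5_general a s α β γ ha hs0 hα hβ hγ g fplus fminus hg hfp hfm
end

section
/- Let a ≠ 0, 0 < s ≤ 1, α² + a² = s², |β| ≤ 1/40, |γ| ≤ 1/40, and let D be the closed unit disc in ℝ². Define g'(x,y) = αx + βxy + γ(x²y/2 + G'(y)) where G'(y) = ∫₀^y F'(w) dw and F'(y) = −(1/2)∫₀^y w((α+βw)² + w² + a²)^{−1/2} dw. Define f'_± = g' ± γ² (1 − x² − y²). Then P(f'₊) ≤ 0 and P(f'₋) ≥ 0 on D, where P(f) = ((∂f/∂x)² + y² + a²)^{−1/2} ∂²f/∂x² + 2 ∂²f/∂y². -/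
open MeasureTheory

namespace Stmt6Aux

noncomputable def Fi (a α β : ℝ) (t : ℝ) : ℝ :=
  -(1 / 2) * ∫ w in (0:ℝ)..t, w * ((α + β * w) ^ 2 + w ^ 2 + a ^ 2) ^ (-(1 : ℝ) / 2)

noncomputable def fc (a α β γ c : ℝ) (q : ℝ × ℝ) : ℝ :=
  α * q.1 + β * (q.1 * q.2) + γ * (1 / 2 * (q.1 * q.1 * q.2) + ∫ t in (0:ℝ)..q.2, Fi a α β t)
    + c * (1 - q.1 * q.1 - q.2 * q.2)

variable {a α β γ : ℝ}

lemma cont_integrand (ha : a ≠ 0) :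
    Continuous fun w : ℝ => w * ((α + β * w) ^ 2 + w ^ 2 + a ^ 2) ^ (-(1 : ℝ) / 2) := by
  refine continuous_id.mul (Continuous.rpow_const (by continuity) fun w => Or.inl ?_)
  positivity

lemma hasDerivAt_Fi (ha : a ≠ 0) (t : ℝ) :
    HasDerivAt (Fi a α β)
      (-(1 / 2) * (t * ((α + β * t) ^ 2 + t ^ 2 + a ^ 2) ^ (-(1 : ℝ) / 2))) t :=
  (((cont_integrand ha).integral_hasStrictDerivAt 0 t).hasDerivAt).const_mul (-(1/2))

lemma cont_Fi (ha : a ≠ 0) : Continuous (Fi a α β) := by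
  rw [continuous_iff_continuousAt]
  exact fun t => (hasDerivAt_Fi ha t).continuousAt

lemma hasDerivAt_Gi (ha : a ≠ 0) (y : ℝ) :
    HasDerivAt (fun y : ℝ => ∫ t in (0:ℝ)..y, Fi a α β t) (Fi a α β y) y :=
  ((cont_Fi ha).integral_hasStrictDerivAt 0 y).hasDerivAt

lemma hasFDerivAt_fc (ha : a ≠ 0) (c : ℝ) (q : ℝ × ℝ) :
    HasFDerivAt (fc a α β γ c)
      ((α + β * q.2 + γ * q.1 * q.2 - 2 * c * q.1) • ContinuousLinearMap.fst ℝ ℝ ℝ +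
       (β * q.1 + γ * (1 / 2 * (q.1 * q.1) + Fi a α β q.2) - 2 * c * q.2) •
         ContinuousLinearMap.snd ℝ ℝ ℝ) q := by
  have h1 : HasFDerivAt (fun q : ℝ × ℝ => q.1) (ContinuousLinearMap.fst ℝ ℝ ℝ) q :=
    hasFDerivAt_fst
  have h2 : HasFDerivAt (fun q : ℝ × ℝ => q.2) (ContinuousLinearMap.snd ℝ ℝ ℝ) q :=
    hasFDerivAt_snd
  have hG : HasFDerivAt (fun q : ℝ × ℝ => ∫ t in (0:ℝ)..q.2, Fi a α β t)
      (Fi a α β q.2 • ContinuousLinearMap.snd ℝ ℝ ℝ) q :=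
    (hasDerivAt_Gi ha q.2).comp_hasFDerivAt q h2
  have H := (((h1.const_mul α).add ((h1.mul h2).const_mul β)).add
      (((((h1.mul h1).mul h2).const_mul (1/2)).add hG).const_mul γ)).add
      ((((hasFDerivAt_const (1:ℝ) q).sub (h1.mul h1)).sub (h2.mul h2)).const_mul c)
  refine H.congr_fderiv (ContinuousLinearMap.ext fun w => ?_)
  simp
  ring

lemma fderiv_fc_x (ha : a ≠ 0) (c : ℝ) (q : ℝ × ℝ) :
    fderiv ℝ (fc a α β γ c) q ((1:ℝ), (0:ℝ)) =
      α + β * q.2 + γ * q.1 * q.2 - 2 * c * q.1 := by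
  rw [(hasFDerivAt_fc ha c q).fderiv]; simp

lemma fderiv_fc_y (ha : a ≠ 0) (c : ℝ) (q : ℝ × ℝ) :
    fderiv ℝ (fc a α β γ c) q ((0:ℝ), (1:ℝ)) =
      β * q.1 + γ * (1 / 2 * (q.1 * q.1) + Fi a α β q.2) - 2 * c * q.2 := by
  rw [(hasFDerivAt_fc ha c q).fderiv]; simp

lemma second_x (c : ℝ) (p : ℝ × ℝ) :
    fderiv ℝ (fun q : ℝ × ℝ => α + β * q.2 + γ * q.1 * q.2 - 2 * c * q.1) p ((1:ℝ), (0:ℝ)) =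
      γ * p.2 - 2 * c := by
  have h1 : HasFDerivAt (fun q : ℝ × ℝ => q.1) (ContinuousLinearMap.fst ℝ ℝ ℝ) p :=
    hasFDerivAt_fst
  have h2 : HasFDerivAt (fun q : ℝ × ℝ => q.2) (ContinuousLinearMap.snd ℝ ℝ ℝ) p :=
    hasFDerivAt_snd
  have H : HasFDerivAt (fun q : ℝ × ℝ => α + β * q.2 + γ * q.1 * q.2 - 2 * c * q.1) _ p :=
    (((hasFDerivAt_const α p).add (h2.const_mul β)).add ((h1.const_mul γ).mul h2)).sub
      (h1.const_mul (2 * c))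
  rw [H.fderiv]
  simp
  ring

lemma second_y (ha : a ≠ 0) (c : ℝ) (p : ℝ × ℝ) :
    fderiv ℝ (fun q : ℝ × ℝ =>
        β * q.1 + γ * (1 / 2 * (q.1 * q.1) + Fi a α β q.2) - 2 * c * q.2) p ((0:ℝ), (1:ℝ)) =
      γ * (-(1 / 2) * (p.2 * ((α + β * p.2) ^ 2 + p.2 ^ 2 + a ^ 2) ^ (-(1 : ℝ) / 2))) - 2 * c := by
  have h1 : HasFDerivAt (fun q : ℝ × ℝ => q.1) (ContinuousLinearMap.fst ℝ ℝ ℝ) p :=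
    hasFDerivAt_fst
  have h2 : HasFDerivAt (fun q : ℝ × ℝ => q.2) (ContinuousLinearMap.snd ℝ ℝ ℝ) p :=
    hasFDerivAt_snd
  have hF : HasFDerivAt (fun q : ℝ × ℝ => Fi a α β q.2)
      ((-(1 / 2) * (p.2 * ((α + β * p.2) ^ 2 + p.2 ^ 2 + a ^ 2) ^ (-(1 : ℝ) / 2))) •
        ContinuousLinearMap.snd ℝ ℝ ℝ) p :=
    (hasDerivAt_Fi ha p.2).comp_hasFDerivAt p h2
  have H : HasFDerivAt (fun q : ℝ × ℝ =>
      β * q.1 + γ * (1 / 2 * (q.1 * q.1) + Fi a α β q.2) - 2 * c * q.2) _ p :=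
    ((h1.const_mul β).add ((((h1.mul h1).const_mul (1/2)).add hF).const_mul γ)).sub
      (h2.const_mul (2 * c))
  rw [H.fderiv]
  simp

lemma Pop_fc (ha : a ≠ 0) (c : ℝ) (p : ℝ × ℝ) :
    Pop a (fc a α β γ c) p =
      ((α + β * p.2 + γ * p.1 * p.2 - 2 * c * p.1) ^ 2 + p.2 ^ 2 + a ^ 2) ^ (-(1 : ℝ) / 2)
          * (γ * p.2 - 2 * c)
      + 2 * (γ * (-(1 / 2) * (p.2 * ((α + β * p.2) ^ 2 + p.2 ^ 2 + a ^ 2) ^ (-(1 : ℝ) / 2)))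
          - 2 * c) := by
  have hx : (fun q => fderiv ℝ (fc a α β γ c) q ((1:ℝ), (0:ℝ)))
      = fun q : ℝ × ℝ => α + β * q.2 + γ * q.1 * q.2 - 2 * c * q.1 :=
    funext fun q => fderiv_fc_x ha c q
  have hy : (fun q => fderiv ℝ (fc a α β γ c) q ((0:ℝ), (1:ℝ)))
      = fun q : ℝ × ℝ => β * q.1 + γ * (1 / 2 * (q.1 * q.1) + Fi a α β q.2) - 2 * c * q.2 :=
    funext fun q => fderiv_fc_y ha c q
  simp only [Pop, hx, hy, fderiv_fc_x ha c p, second_x, second_y ha]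

lemma key (P q y u v c : ℝ) (hP : 0 < P) (hq : 0 < q) (hy : |y| ≤ q)
    (hu : |u| ≤ P) (hv : |v| ≤ q) (hsq : q ^ 2 - P ^ 2 = v ^ 2 - u ^ 2) :
    |c * y * (P⁻¹ - q⁻¹)| ≤ |c| * |u - v| / P := by
  have hD : (0:ℝ) < P * q * (P + q) := by positivity
  have hPQ : P⁻¹ - q⁻¹ = (q ^ 2 - P ^ 2) / (P * q * (P + q)) := by
    field_simp
    ring
  rw [hPQ, hsq]
  have h1 : |v ^ 2 - u ^ 2| ≤ |u - v| * (P + q) := by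
    have e : v ^ 2 - u ^ 2 = (u - v) * (-(u + v)) := by ring
    rw [e, abs_mul, abs_neg]
    gcongr
    exact (abs_add_le u v).trans (add_le_add hu hv)
  calc |c * y * ((v ^ 2 - u ^ 2) / (P * q * (P + q)))|
      = |c| * (|y| * (|v ^ 2 - u ^ 2| / (P * q * (P + q)))) := by
        rw [abs_mul, abs_mul, abs_div, abs_of_pos hD, mul_assoc]
    _ ≤ |c| * (q * ((|u - v| * (P + q)) / (P * q * (P + q)))) := by
        gcongr
    _ = |c| * |u - v| / P := by
        field_simp

lemma rpow_half (A : ℝ) (hA : 0 < A) : A ^ (-(1 : ℝ) / 2) = (Real.sqrt A)⁻¹ := by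
  rw [show (-(1 : ℝ) / 2) = -(1 / 2) by norm_num, Real.rpow_neg hA.le, ← Real.sqrt_eq_rpow]

lemma abs_bound (a γ y u v : ℝ) (ha : a ≠ 0) (hguv : |γ| * |u - v| ≤ 2 * γ ^ 2) :
    |γ * y * ((u ^ 2 + y ^ 2 + a ^ 2) ^ (-(1 : ℝ) / 2)
        - (v ^ 2 + y ^ 2 + a ^ 2) ^ (-(1 : ℝ) / 2))|
      ≤ 2 * γ ^ 2 * (u ^ 2 + y ^ 2 + a ^ 2) ^ (-(1 : ℝ) / 2) := by
  have hA : (0:ℝ) < u ^ 2 + y ^ 2 + a ^ 2 := by positivity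
  have hQ : (0:ℝ) < v ^ 2 + y ^ 2 + a ^ 2 := by positivity
  rw [rpow_half _ hA, rpow_half _ hQ]
  set P := Real.sqrt (u ^ 2 + y ^ 2 + a ^ 2) with hPdef
  set q := Real.sqrt (v ^ 2 + y ^ 2 + a ^ 2) with hqdef
  have hP : 0 < P := Real.sqrt_pos.2 hA
  have hq : 0 < q := Real.sqrt_pos.2 hQ
  have hP2 : P ^ 2 = u ^ 2 + y ^ 2 + a ^ 2 := Real.sq_sqrt hA.le
  have hq2 : q ^ 2 = v ^ 2 + y ^ 2 + a ^ 2 := Real.sq_sqrt hQ.le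
  have hy : |y| ≤ q := by
    rw [← Real.sqrt_sq_eq_abs]
    exact Real.sqrt_le_sqrt (by nlinarith [sq_nonneg v, sq_nonneg a])
  have hu : |u| ≤ P := by
    rw [← Real.sqrt_sq_eq_abs]
    exact Real.sqrt_le_sqrt (by nlinarith [sq_nonneg y, sq_nonneg a])
  have hv : |v| ≤ q := by
    rw [← Real.sqrt_sq_eq_abs]
    exact Real.sqrt_le_sqrt (by nlinarith [sq_nonneg y, sq_nonneg a])
  have hk := key P q y u v γ hP hq hy hu hv (by rw [hP2, hq2]; ring)
  refine hk.trans ?_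
  rw [div_eq_mul_inv, mul_comm (2 * γ ^ 2) P⁻¹, mul_comm (|γ| * |u - v|) P⁻¹]
  gcongr

lemma ineq_plus (a γ y u v : ℝ) (ha : a ≠ 0) (hguv : |γ| * |u - v| ≤ 2 * γ ^ 2) :
    (u ^ 2 + y ^ 2 + a ^ 2) ^ (-(1 : ℝ) / 2) * (γ * y - 2 * γ ^ 2)
      + 2 * (γ * (-(1 / 2) * (y * (v ^ 2 + y ^ 2 + a ^ 2) ^ (-(1 : ℝ) / 2))) - 2 * γ ^ 2)
    ≤ 0 := by
  have hb := abs_bound a γ y u v ha hguv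
  have h1 := le_of_abs_le hb
  nlinarith [sq_nonneg γ]

lemma ineq_minus (a γ y u v : ℝ) (ha : a ≠ 0) (hguv : |γ| * |u - v| ≤ 2 * γ ^ 2) :
    0 ≤ (u ^ 2 + y ^ 2 + a ^ 2) ^ (-(1 : ℝ) / 2) * (γ * y + 2 * γ ^ 2)
      + 2 * (γ * (-(1 / 2) * (y * (v ^ 2 + y ^ 2 + a ^ 2) ^ (-(1 : ℝ) / 2))) + 2 * γ ^ 2) := by
  have hb := abs_bound a γ y u v ha hguv
  have h1 := neg_abs_le (γ * y * ((u ^ 2 + y ^ 2 + a ^ 2) ^ (-(1 : ℝ) / 2)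
        - (v ^ 2 + y ^ 2 + a ^ 2) ^ (-(1 : ℝ) / 2)))
  nlinarith [sq_nonneg γ]

end Stmt6Aux

/-- Proposition 4.6: `f'₊ = g' + γ² (1 - x² - y²)` is a supersolution and
`f'₋ = g' - γ² (1 - x² - y²)` a subsolution of `P(f) = 0` on the closed unit disc. -/
theorem stmt_6 (a s α β γ : ℝ) (ha : a ≠ 0) (hs0 : 0 < s) (hs1 : s ≤ 1)
    (hα : α ^ 2 + a ^ 2 = s ^ 2) (hβ : |β| ≤ 1 / 40) (hγ : |γ| ≤ 1 / 40)
    (g' fplus fminus : ℝ × ℝ → ℝ)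
    (hg : ∀ x y : ℝ, g' (x, y) =
      α * x + β * x * y + γ * (x ^ 2 * y / 2 +
        ∫ t in (0:ℝ)..y, (-(1 / 2) *
          ∫ w in (0:ℝ)..t, w * ((α + β * w) ^ 2 + w ^ 2 + a ^ 2) ^ (-(1 : ℝ) / 2))))
    (hfp : ∀ p : ℝ × ℝ, fplus p = g' p + γ ^ 2 * (1 - p.1 ^ 2 - p.2 ^ 2))
    (hfm : ∀ p : ℝ × ℝ, fminus p = g' p - γ ^ 2 * (1 - p.1 ^ 2 - p.2 ^ 2)) :
    ∀ p : ℝ × ℝ, p.1 ^ 2 + p.2 ^ 2 ≤ 1 →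
      Pop a fplus p ≤ 0 ∧ 0 ≤ Pop a fminus p := by
  have hfp' : fplus = Stmt6Aux.fc a α β γ (γ ^ 2) := by
    funext q
    rw [hfp q, show g' q = _ from hg q.1 q.2]
    simp only [Stmt6Aux.fc, Stmt6Aux.Fi]
    ring
  have hfm' : fminus = Stmt6Aux.fc a α β γ (-(γ ^ 2)) := by
    funext q
    rw [hfm q, show g' q = _ from hg q.1 q.2]
    simp only [Stmt6Aux.fc, Stmt6Aux.Fi]
    ring
  intro p hp
  have hx1 : |p.1| ≤ 1 := by
    nlinarith [sq_abs p.1, sq_abs p.2, abs_nonneg p.1, abs_nonneg p.2]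
  have hy1 : |p.2| ≤ 1 := by
    nlinarith [sq_abs p.1, sq_abs p.2, abs_nonneg p.1, abs_nonneg p.2]
  have habsγ : |γ| * |γ| = γ ^ 2 := by rw [← abs_mul, ← sq, abs_sq]
  -- bound for the plus case
  have hguvp : |γ| * |(α + β * p.2 + γ * p.1 * p.2 - 2 * γ ^ 2 * p.1) - (α + β * p.2)|
      ≤ 2 * γ ^ 2 := by
    have e : (α + β * p.2 + γ * p.1 * p.2 - 2 * γ ^ 2 * p.1) - (α + β * p.2)
        = γ * (p.1 * (p.2 - 2 * γ)) := by ring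
    rw [e, abs_mul, abs_mul]
    have h2 : |p.2 - 2 * γ| ≤ |p.2| + 2 * |γ| := by
      calc |p.2 - 2 * γ| ≤ |p.2| + |2 * γ| := abs_sub _ _
        _ = |p.2| + 2 * |γ| := by rw [abs_mul, abs_two]
    have h3 : |p.1| * |p.2 - 2 * γ| ≤ 2 := by
      have h5 : |p.2 - 2 * γ| ≤ 2 := by linarith
      calc |p.1| * |p.2 - 2 * γ| ≤ 1 * 2 :=
            mul_le_mul hx1 h5 (abs_nonneg _) (by norm_num)
        _ = 2 := by norm_num
    have h4 : |γ| * (|γ| * (|p.1| * |p.2 - 2 * γ|)) ≤ |γ| * (|γ| * 2) := by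
      gcongr
    linarith [h4, habsγ]
  have hguvm : |γ| * |(α + β * p.2 + γ * p.1 * p.2 - 2 * -(γ ^ 2) * p.1) - (α + β * p.2)|
      ≤ 2 * γ ^ 2 := by
    have e : (α + β * p.2 + γ * p.1 * p.2 - 2 * -(γ ^ 2) * p.1) - (α + β * p.2)
        = γ * (p.1 * (p.2 + 2 * γ)) := by ring
    rw [e, abs_mul, abs_mul]
    have h2 : |p.2 + 2 * γ| ≤ |p.2| + 2 * |γ| := by
      calc |p.2 + 2 * γ| ≤ |p.2| + |2 * γ| := abs_add_le _ _
        _ = |p.2| + 2 * |γ| := by rw [abs_mul, abs_two]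
    have h3 : |p.1| * |p.2 + 2 * γ| ≤ 2 := by
      have h5 : |p.2 + 2 * γ| ≤ 2 := by linarith
      calc |p.1| * |p.2 + 2 * γ| ≤ 1 * 2 :=
            mul_le_mul hx1 h5 (abs_nonneg _) (by norm_num)
        _ = 2 := by norm_num
    have h4 : |γ| * (|γ| * (|p.1| * |p.2 + 2 * γ|)) ≤ |γ| * (|γ| * 2) := by
      gcongr
    linarith [h4, habsγ]
  constructor
  · rw [hfp', Stmt6Aux.Pop_fc ha (γ ^ 2) p]
    exact Stmt6Aux.ineq_plus a γ p.2 _ _ ha hguvp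
  · rw [hfm', Stmt6Aux.Pop_fc ha (-(γ ^ 2)) p]
    have := Stmt6Aux.ineq_minus a γ p.2
      (α + β * p.2 + γ * p.1 * p.2 - 2 * -(γ ^ 2) * p.1) (α + β * p.2) ha hguvm
    linarith [this]
end

section
/- Let S ⊂ ℝ² be a domain, a ∈ ℝ, and f ∈ C²(S) satisfying ((∂f/∂x)² + y² + a²)^{−1/2} ∂²f/∂x² + 2 ∂²f/∂y² = 0 with (∂f/∂x)² + y² + a² > 0 on S. Set u = ∂f/∂y and v = ∂f/∂x. Then u, v satisfy ∂u/∂x = ∂v/∂y and ∂v/∂x = −2(v² + y² + a²)^{1/2} ∂u/∂y on S. -/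
open Set

/-!
The first equation is the symmetry of the mixed second partials `∂²f/∂y∂x = ∂²f/∂x∂y` of a `C²`
function. The second is `P(f) = 0` multiplied by `(v² + y² + a²)^{1/2}`, which is legitimate
because this quantity is positive.
-/

section SecondDerivative

variable {𝕜 E F : Type*} [NontriviallyNormedField 𝕜] [NormedAddCommGroup E] [NormedSpace 𝕜 E]
  [NormedAddCommGroup F] [NormedSpace 𝕜 F] {f : E → F} {x : E}

theorem fderiv_fderiv_apply (hf : DifferentiableAt 𝕜 (fderiv 𝕜 f) x) (v w : E) :
    fderiv 𝕜 (fun y => fderiv 𝕜 f y w) x v = fderiv 𝕜 (fderiv 𝕜 f) x v w := by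
  rw [fderiv_clm_apply hf (differentiableAt_const w)]
  simp

theorem ContDiffAt.fderiv_fderiv_apply_comm [IsRCLikeNormedField 𝕜] (hf : ContDiffAt 𝕜 2 f x)
    (v w : E) :
    fderiv 𝕜 (fun y => fderiv 𝕜 f y w) x v = fderiv 𝕜 (fun y => fderiv 𝕜 f y v) x w := by
  have hdiff : DifferentiableAt 𝕜 (fderiv 𝕜 f) x :=
    (hf.fderiv_right (m := 1) le_rfl).differentiableAt one_ne_zero
  rw [fderiv_fderiv_apply hdiff, fderiv_fderiv_apply hdiff,
    (hf.isSymmSndFDerivAt minSmoothness_of_isRCLikeNormedField.le).eq]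

end SecondDerivative

theorem Real.rpow_neg_half_mul_add_eq_zero_iff {A : ℝ} (hA : 0 < A) (b c : ℝ) :
    A ^ (-(1 : ℝ) / 2) * b + c = 0 ↔ b = -(A ^ ((1 : ℝ) / 2) * c) := by
  have hsqrt : 0 < A ^ ((1 : ℝ) / 2) := Real.rpow_pos_of_pos hA _
  rw [neg_div, Real.rpow_neg hA.le]
  constructor <;> intro h
  · field_simp at h
    linarith
  · rw [h]
    field_simp
    ring

theorem stmt_18_general (S U : Set (ℝ × ℝ)) (hU : IsOpen U) (hSU : S ⊆ U)
    (a : ℝ) (f : ℝ × ℝ → ℝ) (hf : ContDiffOn ℝ 2 f U)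
    (hpos : ∀ p ∈ S, 0 < (fderiv ℝ f p ((1 : ℝ), (0 : ℝ))) ^ 2 + p.2 ^ 2 + a ^ 2)
    (heq : ∀ p ∈ S, Pop a f p = 0)
    (u v : ℝ × ℝ → ℝ)
    (hu : u = fun q => fderiv ℝ f q ((0 : ℝ), (1 : ℝ)))
    (hv : v = fun q => fderiv ℝ f q ((1 : ℝ), (0 : ℝ))) :
    ∀ p ∈ S,
      fderiv ℝ u p ((1 : ℝ), (0 : ℝ)) = fderiv ℝ v p ((0 : ℝ), (1 : ℝ)) ∧
      fderiv ℝ v p ((1 : ℝ), (0 : ℝ)) =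
        -2 * ((v p) ^ 2 + p.2 ^ 2 + a ^ 2) ^ ((1 : ℝ) / 2)
          * fderiv ℝ u p ((0 : ℝ), (1 : ℝ)) := by
  intro p hp
  subst hu hv
  have hfp : ContDiffAt ℝ 2 f p := hf.contDiffAt (hU.mem_nhds (hSU hp))
  refine ⟨hfp.fderiv_fderiv_apply_comm _ _, ?_⟩
  have hP := (Real.rpow_neg_half_mul_add_eq_zero_iff (hpos p hp) _ _).mp (heq p hp)
  rw [hP]
  ring

/-- Proposition 3.2 (converse direction): if `f` is a `C²` solution of `P(f) = 0`, then
`u = ∂f/∂y` and `v = ∂f/∂x` satisfy the nonlinear Cauchy–Riemann system on `S`. -/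
theorem stmt_18 (S U : Set (ℝ × ℝ)) (hS : IsCompact S) (hU : IsOpen U) (hSU : S ⊆ U)
    (a : ℝ) (f : ℝ × ℝ → ℝ) (hf : ContDiffOn ℝ 2 f U)
    (hpos : ∀ p ∈ S, 0 < (fderiv ℝ f p ((1 : ℝ), (0 : ℝ))) ^ 2 + p.2 ^ 2 + a ^ 2)
    (heq : ∀ p ∈ S, Pop a f p = 0)
    (u v : ℝ × ℝ → ℝ)
    (hu : u = fun q => fderiv ℝ f q ((0 : ℝ), (1 : ℝ)))
    (hv : v = fun q => fderiv ℝ f q ((1 : ℝ), (0 : ℝ))) :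
    ∀ p ∈ S,
      fderiv ℝ u p ((1 : ℝ), (0 : ℝ)) = fderiv ℝ v p ((0 : ℝ), (1 : ℝ)) ∧
      fderiv ℝ v p ((1 : ℝ), (0 : ℝ)) =
        -2 * ((v p) ^ 2 + p.2 ^ 2 + a ^ 2) ^ ((1 : ℝ) / 2)
          * fderiv ℝ u p ((0 : ℝ), (1 : ℝ)) :=
  stmt_18_general S U hU hSU a f hf hpos heq u v hu hv
end
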